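/- Fix an integer m ≥ 2. The generating functions T_i(x) satisfy, as formal power series: T₁(x) = Z_m(x); T₂(x) = (1−x^{m−2})/(1−x) + x^{m−2}G(x); T₃(x) = x^{m−2}(1−x^{m−2})/(1−x) + x^{2m−4}H(x); T₄(x) = (1−x^{m−1})/(1−x) + x^{m−1}Z_m(x); T₅(x) = x^{m−1}(1−x^{m−2})/(1−x) + x^{2m−3}G(x); T₆(x) = x^{m−1}(1−x^{m−1})/(1−x) + x^{2m−2}Z_m(x). -/

import Mathlib

open PowerSeries

namespace Paper

/-- The arc set of a diagram: a finite set of pairs `(i,j)`. -/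
abbrev Arcs := Finset (ℕ × ℕ)

/-- A diagram on `[n] = {1,…,n}`: every arc `(i,j)` satisfies `1 ≤ i < j ≤ n`. -/
def IsDiagram (n : ℕ) (A : Arcs) : Prop :=
  ∀ p ∈ A, 1 ≤ p.1 ∧ p.1 < p.2 ∧ p.2 ≤ n

/-- Two arcs `p = (i₁,j₁)` and `q = (i₂,j₂)` cross if `i₁ < i₂ < j₁ < j₂`. -/
def Crossing (p q : ℕ × ℕ) : Prop :=
  p.1 < q.1 ∧ q.1 < p.2 ∧ p.2 < q.2

/-- A stack on `[n]`: a diagram with no two crossing arcs. -/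
def IsStack (n : ℕ) (A : Arcs) : Prop :=
  IsDiagram n A ∧ ∀ p ∈ A, ∀ q ∈ A, ¬ Crossing p q

/-- Left-degree of vertex `v`: number of arcs `(u,v)` with `u < v`. -/
def ld (A : Arcs) (v : ℕ) : ℕ := (A.filter fun p => p.2 = v).card

/-- Right-degree of vertex `v`: number of arcs `(v,w)` with `v < w`. -/
def rd (A : Arcs) (v : ℕ) : ℕ := (A.filter fun p => p.1 = v).card

/-- Degree of a vertex. -/
def deg (A : Arcs) (v : ℕ) : ℕ := ld A v + rd A v

/-- A zigzag stack: a stack where every vertex has degree ≤ 2 and no vertex has both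
positive left-degree and positive right-degree. -/
def IsZigzag (n : ℕ) (A : Arcs) : Prop :=
  IsStack n A ∧ (∀ v, deg A v ≤ 2) ∧ ∀ v, ¬ (1 ≤ ld A v ∧ 1 ≤ rd A v)

/-- Adjacency in the underlying graph of a diagram. -/
def adj (A : Arcs) (u v : ℕ) : Prop := (u, v) ∈ A ∨ (v, u) ∈ A

/-- `v` lies in the primary component (connected component of vertex 1). -/
def inPrimary (A : Arcs) (v : ℕ) : Prop := Relation.ReflTransGen (adj A) 1 v

/-- The underlying graph on vertex set `[n]` is connected. -/
def ConnectedOn (n : ℕ) (A : Arcs) : Prop :=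
  ∀ u v, 1 ≤ u → u ≤ n → 1 ≤ v → v ≤ n → Relation.ReflTransGen (adj A) u v

/-- Number of stacks on `[n]`. -/
noncomputable def stackCount (n : ℕ) : ℕ := Nat.card {A : Arcs // IsStack n A}

/-- Number of zigzag stacks on `[n]`. -/
noncomputable def zigzagCount (n : ℕ) : ℕ := Nat.card {A : Arcs // IsZigzag n A}

/-- Number of connected zigzag stacks on `[n]`. -/
noncomputable def connZigzagCount (n : ℕ) : ℕ :=
  Nat.card {A : Arcs // IsZigzag n A ∧ ConnectedOn n A}

/-- The ordinary generating function of the numbers of zigzag stacks. -/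
noncomputable def Zgf : PowerSeries ℚ := PowerSeries.mk fun n => (zigzagCount n : ℚ)

/-- The power series variable over ℚ. -/
noncomputable def Xq : PowerSeries ℚ := PowerSeries.X

/-- An `m`-reduced zigzag stack on `[n]`:
(1) `ld(i) + rd(i+m−1) ≤ 2` for `1 ≤ i ≤ n−m+1` (written additively);
(2) if `1 ≤ i < j ≤ n` with `ld(i) > 0` and `rd(j) > 0` then `j − i ≥ m−1`. -/
def MRed (m n : ℕ) (A : Arcs) : Prop :=
  IsZigzag n A ∧
  (∀ i, 1 ≤ i → i + m ≤ n + 1 → ld A i + rd A (i + m - 1) ≤ 2) ∧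
  (∀ i j, 1 ≤ i → i < j → j ≤ n → 0 < ld A i → 0 < rd A j → i + m ≤ j + 1)

/-- An `m`-regular linear stack on `[n]`: every arc has length ≥ m and every vertex has
degree ≤ 2. -/
def RegLinear (m n : ℕ) (A : Arcs) : Prop :=
  IsStack n A ∧ (∀ p ∈ A, p.1 + m ≤ p.2) ∧ ∀ v, deg A v ≤ 2

/-- Number of `m`-reduced zigzag stacks on `[n]`. -/
noncomputable def zm (m n : ℕ) : ℕ := Nat.card {A : Arcs // MRed m n A}

/-- Number of `m`-regular linear stacks on `[n]`. -/
noncomputable def rmc (m n : ℕ) : ℕ := Nat.card {A : Arcs // RegLinear m n A}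

/-- Generating function of `m`-reduced zigzag stacks. -/
noncomputable def Zm (m : ℕ) : PowerSeries ℚ := PowerSeries.mk fun n => (zm m n : ℚ)

/-- Generating function of `m`-regular linear stacks. -/
noncomputable def Rm (m : ℕ) : PowerSeries ℚ := PowerSeries.mk fun n => (rmc m n : ℚ)

/-- Extended left-degree function used to define boundary types. -/
def extLD (A : Arcs) (l a v : ℕ) : ℕ :=
  if v = 0 then a else if v = l + 1 then 0 else ld A v

/-- Extended right-degree function used to define boundary types. -/
def extRD (A : Arcs) (l b v : ℕ) : ℕ :=
  if v = 0 then 0 else if v = l + 1 then b else rd A v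

/-- An `m`-reduced zigzag stack on `[l]` of boundary type `(a,b)`. -/
def BoundaryType (m a b l : ℕ) (A : Arcs) : Prop :=
  MRed m l A ∧
  (∀ i, i + m ≤ l + 2 → extLD A l a i + extRD A l b (i + m - 1) ≤ 2) ∧
  (∀ i j, i < j → j ≤ l + 1 → 0 < extLD A l a i → 0 < extRD A l b j → i + m ≤ j + 1)

/-- Number of boundary-type-`(a,b)` structures on `[n]`. -/
noncomputable def tc (m a b n : ℕ) : ℕ := Nat.card {A : Arcs // BoundaryType m a b n A}

/-- Generating functions `T_i(x)`; types T₁,…,T₆ correspond to `(a,b)` =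
(0,0), (1,0), (1,1), (2,0), (2,1), (2,2). -/
noncomputable def Tgf (m a b : ℕ) : PowerSeries ℚ := PowerSeries.mk fun n => (tc m a b n : ℚ)

/-- Type G : `m`-reduced zigzag stack with `deg(1) ≤ 1`. -/
def TypeG (m n : ℕ) (A : Arcs) : Prop := MRed m n A ∧ deg A 1 ≤ 1

/-- Type H : `m`-reduced zigzag stack with `deg(1) ≤ 1` and `deg(n) ≤ 1`. -/
def TypeH (m n : ℕ) (A : Arcs) : Prop := MRed m n A ∧ deg A 1 ≤ 1 ∧ deg A n ≤ 1

noncomputable def gcnt (m n : ℕ) : ℕ := Nat.card {A : Arcs // TypeG m n A}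
noncomputable def hcnt (m n : ℕ) : ℕ := Nat.card {A : Arcs // TypeH m n A}

/-- Generating function `G(x)`. -/
noncomputable def Ggf (m : ℕ) : PowerSeries ℚ := PowerSeries.mk fun n => (gcnt m n : ℚ)

/-- Generating function `H(x)`. -/
noncomputable def Hgf (m : ℕ) : PowerSeries ℚ := PowerSeries.mk fun n => (hcnt m n : ℚ)

/-- The reduction map θ_m: replace each arc `(i,j)` by `(i, j−m+1)`. -/
def theta (m : ℕ) (A : Arcs) : Arcs := A.image fun p => (p.1, p.2 - m + 1)

/-- Relabel a structure whose arcs lie in `{c+1, …}` down by `c`. -/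
def shiftDown (c : ℕ) (A : Arcs) : Arcs := A.image fun p => (p.1 - c, p.2 - c)

/-- Conditions (1) and (2) of `m`-reducedness restricted to a set `J` of vertices. -/
def CondOn (m : ℕ) (A : Arcs) (J : Finset ℕ) : Prop :=
  (∀ i, i ∈ J → i + m - 1 ∈ J → ld A i + rd A (i + m - 1) ≤ 2) ∧
  (∀ i j, i ∈ J → j ∈ J → i < j → 0 < ld A i → 0 < rd A j → i + m ≤ j + 1)

/-! A boundary vertex of left-degree `a > 0` forbids arcs from starting among the first
`m - 2` vertices (condition (2)), and for `a = 2` also at vertex `m - 1` (condition (1)),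
while for `a = 1` it allows at most one arc to start at `m - 1`. So the first `margin m a`
vertices are isolated, and deleting them leaves an `m`-reduced zigzag stack whose first
vertex has degree at most one when `a = 1`; symmetrically at the right end. When fewer
than `margin m a + margin m b` vertices are available only the empty diagram remains, and
it is admissible exactly when the two boundary vertices are compatible. Reading off
coefficients gives the six formulas; reflection identifies the stacks whose last vertex
has degree at most one with those counted by `g`. -/

section Degrees

variable {m n : ℕ} {A : Arcs}

lemma ld_pos_of_mem {p : ℕ × ℕ} (hp : p ∈ A) : 0 < ld A p.2 :=
  Finset.card_pos.2 ⟨p, Finset.mem_filter.2 ⟨hp, rfl⟩⟩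

lemma rd_pos_of_mem {p : ℕ × ℕ} (hp : p ∈ A) : 0 < rd A p.1 :=
  Finset.card_pos.2 ⟨p, Finset.mem_filter.2 ⟨hp, rfl⟩⟩

lemma IsDiagram.ld_eq_zero (hA : IsDiagram n A) {v : ℕ} (hv : v ≤ 1 ∨ n < v) :
    ld A v = 0 :=
  Finset.card_eq_zero.2 <| Finset.filter_eq_empty_iff.2 fun p hp hpv => by
    have := hA p hp
    omega

lemma IsDiagram.rd_eq_zero (hA : IsDiagram n A) {v : ℕ} (hv : v = 0 ∨ n ≤ v) :
    rd A v = 0 :=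
  Finset.card_eq_zero.2 <| Finset.filter_eq_empty_iff.2 fun p hp hpv => by
    have := hA p hp
    omega

lemma IsZigzag.ld_le_two (hA : IsZigzag n A) (v : ℕ) : ld A v ≤ 2 :=
  (Nat.le_add_right _ _).trans (hA.2.1 v)

lemma IsZigzag.rd_le_two (hA : IsZigzag n A) (v : ℕ) : rd A v ≤ 2 :=
  (Nat.le_add_left _ _).trans (hA.2.1 v)

lemma MRed.isDiagram (hA : MRed m n A) : IsDiagram n A := hA.1.1.1

@[simp] lemma ld_empty (v : ℕ) : ld ∅ v = 0 := rfl

@[simp] lemma rd_empty (v : ℕ) : rd ∅ v = 0 := rfl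

lemma mred_empty : MRed m n ∅ := by
  refine ⟨⟨⟨?_, ?_⟩, ?_, ?_⟩, ?_, ?_⟩ <;> simp [IsDiagram, deg]

end Degrees

section Shift

variable {m n ℓ c : ℕ} {A : Arcs}

def shiftUp (c : ℕ) (A : Arcs) : Arcs := A.image fun p => (p.1 + c, p.2 + c)

lemma shiftUp_map_injective (c : ℕ) :
    Function.Injective fun p : ℕ × ℕ => (p.1 + c, p.2 + c) := by
  rintro ⟨a, b⟩ ⟨a', b'⟩ h
  simp only [Prod.mk.injEq] at h ⊢
  omega

lemma shiftUp_injective (c : ℕ) : Function.Injective (shiftUp c) :=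
  Finset.image_injective (shiftUp_map_injective c)

lemma ld_shiftUp (hA : IsDiagram ℓ A) (c v : ℕ) : ld (shiftUp c A) v = ld A (v - c) := by
  rw [ld, ld, shiftUp, Finset.filter_image,
    Finset.card_image_of_injective _ (shiftUp_map_injective c)]
  congr 1
  refine Finset.filter_congr fun p hp => ?_
  have := hA p hp
  omega

lemma rd_shiftUp (hA : IsDiagram ℓ A) (c v : ℕ) : rd (shiftUp c A) v = rd A (v - c) := by
  rw [rd, rd, shiftUp, Finset.filter_image,
    Finset.card_image_of_injective _ (shiftUp_map_injective c)]
  congr 1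
  refine Finset.filter_congr fun p hp => ?_
  have := hA p hp
  omega

lemma IsDiagram.shiftUp (hA : IsDiagram ℓ A) (h : c + ℓ ≤ n) :
    IsDiagram n (shiftUp c A) := by
  intro p hp
  obtain ⟨q, hq, rfl⟩ := Finset.mem_image.1 hp
  have := hA q hq
  dsimp only
  omega

lemma forall_sub_iff {P : ℕ → Prop} (c : ℕ) : (∀ v, P (v - c)) ↔ ∀ v, P v :=
  (Function.Surjective.forall fun v => ⟨v + c, Nat.add_sub_cancel v c⟩).symm

lemma isZigzag_shiftUp_iff (hA : IsDiagram ℓ A) (h : c + ℓ ≤ n) :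
    IsZigzag n (shiftUp c A) ↔ IsZigzag ℓ A := by
  simp only [IsZigzag, IsStack, deg, ld_shiftUp hA, rd_shiftUp hA, hA.shiftUp h, hA,
    true_and]
  rw [forall_sub_iff (P := fun v => ld A v + rd A v ≤ 2),
    forall_sub_iff (P := fun v => ¬(1 ≤ ld A v ∧ 1 ≤ rd A v))]
  simp only [shiftUp, Finset.forall_mem_image, Crossing, add_lt_add_iff_right]

lemma mred_shiftUp_iff (hA : IsDiagram ℓ A) (h : c + ℓ ≤ n) :
    MRed m n (shiftUp c A) ↔ MRed m ℓ A := by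
  simp only [MRed, isZigzag_shiftUp_iff hA h, ld_shiftUp hA, rd_shiftUp hA]
  refine and_congr_right fun hz => and_congr ⟨fun h1 i hi hin => ?_, fun h1 i hi hin => ?_⟩
    ⟨fun h2 i j hi hij hj hli hrj => ?_, fun h2 i j hi hij hj hli hrj => ?_⟩
  · simpa [show i + c + m - 1 - c = i + m - 1 by omega] using h1 (i + c) (by omega) (by omega)
  · have := hz.ld_le_two (i - c)
    have := hz.rd_le_two (i + m - 1 - c)
    by_cases hic : i ≤ c
    · rw [hA.ld_eq_zero (by omega)]
      omega
    by_cases hil : i - c + m ≤ ℓ + 1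
    · simpa [show i + m - 1 - c = i - c + m - 1 by omega] using h1 (i - c) (by omega) hil
    · rw [hA.rd_eq_zero (v := i + m - 1 - c) (by omega)]
      omega
  · have := h2 (i + c) (j + c) (by omega) (by omega) (by omega) (by simpa using hli)
      (by simpa using hrj)
    omega
  · have hic : c + 2 ≤ i := by
      by_contra
      rw [hA.ld_eq_zero (by omega)] at hli
      omega
    have hjc : c < j ∧ j - c < ℓ := by
      by_contra
      rw [hA.rd_eq_zero (by omega)] at hrj
      omega
    have := h2 (i - c) (j - c) (by omega) (by omega) (by omega) hli hrj
    omega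

lemma shiftUp_shiftDown (hA : IsDiagram n A) (h : ∀ p ∈ A, c < p.1) :
    shiftUp c (shiftDown c A) = A := by
  rw [shiftUp, shiftDown, Finset.image_image]
  refine (Finset.image_congr fun p hp => ?_).trans (Finset.image_id)
  have := hA p hp
  have := h p hp
  ext <;> simp <;> omega

lemma MRed.exists_eq_shiftUp (hA : MRed m n A) {k : ℕ} (hck : c + k ≤ n)
    (hsupp : ∀ p ∈ A, c < p.1 ∧ p.2 ≤ c + k) : ∃ B, MRed m k B ∧ A = shiftUp c B := by
  have hB : IsDiagram k (shiftDown c A) := by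
    intro p hp
    obtain ⟨q, hq, rfl⟩ := Finset.mem_image.1 hp
    have := hA.isDiagram q hq
    have := hsupp q hq
    dsimp only
    omega
  have hAB := shiftUp_shiftDown hA.isDiagram fun p hp => (hsupp p hp).1
  exact ⟨_, (mred_shiftUp_iff hB hck).1 (by rwa [hAB]), hAB.symm⟩

end Shift

section Reflect

variable {m n : ℕ} {A : Arcs}

def reflect (n : ℕ) (A : Arcs) : Arcs := A.image fun p => (n + 1 - p.2, n + 1 - p.1)

lemma reflect_map_injOn (hA : IsDiagram n A) :
    Set.InjOn (fun p : ℕ × ℕ => (n + 1 - p.2, n + 1 - p.1)) A := by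
  rintro ⟨a, b⟩ hp ⟨a', b'⟩ hq h
  have := hA _ hp
  have := hA _ hq
  simp only [Prod.mk.injEq] at h ⊢
  omega

lemma IsDiagram.reflect (hA : IsDiagram n A) : IsDiagram n (reflect n A) := by
  intro p hp
  obtain ⟨q, hq, rfl⟩ := Finset.mem_image.1 hp
  have := hA q hq
  dsimp only
  omega

lemma ld_reflect (hA : IsDiagram n A) (v : ℕ) : ld (reflect n A) v = rd A (n + 1 - v) := by
  rw [ld, rd, reflect, Finset.filter_image, Finset.card_image_of_injOn
    ((reflect_map_injOn hA).mono (Finset.coe_subset.2 (Finset.filter_subset _ _)))]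
  congr 1
  refine Finset.filter_congr fun p hp => ?_
  have := hA p hp
  omega

lemma rd_reflect (hA : IsDiagram n A) (v : ℕ) : rd (reflect n A) v = ld A (n + 1 - v) := by
  rw [ld, rd, reflect, Finset.filter_image, Finset.card_image_of_injOn
    ((reflect_map_injOn hA).mono (Finset.coe_subset.2 (Finset.filter_subset _ _)))]
  congr 1
  refine Finset.filter_congr fun p hp => ?_
  have := hA p hp
  omega

lemma deg_reflect (hA : IsDiagram n A) (v : ℕ) : deg (reflect n A) v = deg A (n + 1 - v) := by
  rw [deg, deg, ld_reflect hA, rd_reflect hA, add_comm]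

lemma reflect_reflect (hA : IsDiagram n A) : reflect n (reflect n A) = A := by
  rw [reflect, reflect, Finset.image_image]
  refine (Finset.image_congr fun p hp => ?_).trans (Finset.image_id)
  have := hA p hp
  ext <;> simp <;> omega

lemma MRed.reflect (hM : MRed m n A) : MRed m n (reflect n A) := by
  obtain ⟨⟨⟨hA, hcr⟩, hdeg, hboth⟩, h1, h2⟩ := hM
  refine ⟨⟨⟨hA.reflect, ?_⟩, fun v => ?_, fun v hv => ?_⟩, fun i hi hin => ?_,
    fun i j hi hij hj hli hrj => ?_⟩
  · simp only [Paper.reflect, Finset.forall_mem_image, Crossing]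
    intro p hp q hq hpq
    have := hA p hp
    have := hA q hq
    exact hcr q hq p hp ⟨by omega, by omega, by omega⟩
  · exact (deg_reflect hA v).trans_le (hdeg _)
  · rw [ld_reflect hA, rd_reflect hA] at hv
    exact hboth _ hv.symm
  · have := h1 (n + 2 - m - i) (by omega) (by omega)
    rw [ld_reflect hA, rd_reflect hA, show n + 1 - (i + m - 1) = n + 2 - m - i by omega]
    rw [show n + 2 - m - i + m - 1 = n + 1 - i by omega] at this
    omega
  · rw [ld_reflect hA] at hli
    rw [rd_reflect hA] at hrj
    have : n + 1 - i < n := by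
      by_contra
      rw [hA.rd_eq_zero (by omega)] at hli
      omega
    have : 2 ≤ n + 1 - j := by
      by_contra
      rw [hA.ld_eq_zero (by omega)] at hrj
      omega
    have := h2 (n + 1 - j) (n + 1 - i) (by omega) (by omega) (by omega) hrj hli
    omega

lemma card_mred_deg_last_le_one (m n : ℕ) :
    Nat.card {B : Arcs // MRed m n B ∧ deg B n ≤ 1} = gcnt m n := by
  have hdeg {B : Arcs} (hB : MRed m n B) {v w : ℕ} (hvw : v + w = n + 1) :
      deg (reflect n B) w = deg B v := by
    rw [deg_reflect hB.isDiagram, show n + 1 - w = v by omega]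
  exact Nat.card_congr
    { toFun := fun B => ⟨reflect n B.1, B.2.1.reflect, (hdeg B.2.1 rfl).trans_le B.2.2⟩
      invFun := fun B => ⟨reflect n B.1, B.2.1.reflect,
        (hdeg B.2.1 (add_comm 1 n)).trans_le B.2.2⟩
      left_inv := fun B => Subtype.ext (reflect_reflect B.2.1.isDiagram)
      right_inv := fun B => Subtype.ext (reflect_reflect B.2.1.isDiagram) }

end Reflect

section Boundary

variable {m a b n : ℕ} {A : Arcs}

-- Conditions (1) and (2) of a boundary type between the two boundary vertices `0`, `n + 1`.
abbrev BoundariesCompatible (m a b n : ℕ) : Prop :=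
  0 < a → 0 < b → m ≤ n + 2 ∧ (n + 2 = m → a + b ≤ 2)

-- Conditions (1) and (2) of a boundary type that involve a boundary vertex.
abbrev BoundaryConditions (m a b n : ℕ) (A : Arcs) : Prop :=
  (a + rd A (m - 1) ≤ 2 ∧ (0 < a → ∀ j, 0 < rd A j → m ≤ j + 1)) ∧
  (ld A (n + 2 - m) + b ≤ 2 ∧ (0 < b → ∀ i, 0 < ld A i → i + m ≤ n + 2)) ∧
  BoundariesCompatible m a b n

lemma BoundaryType.boundaryConditions (hm : 2 ≤ m) (ha : a ≤ 2) (hb : b ≤ 2)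
    (hA : BoundaryType m a b n A) : BoundaryConditions m a b n A := by
  obtain ⟨hM, e1, e2⟩ := hA
  have hD := hM.isDiagram
  refine ⟨⟨?_, fun ha j hj => ?_⟩, ⟨?_, fun hb i hi => ?_⟩,
    fun ha hb => ⟨?_, fun he => ?_⟩⟩
  · by_cases hmn : m ≤ n
    · have := e1 0 (by omega)
      simp only [extLD, extRD, zero_add] at this
      split_ifs at this <;> omega
    · rw [hD.rd_eq_zero (by omega)]
      omega
  · have : 0 < j ∧ j < n := by
      by_contra
      rw [hD.rd_eq_zero (by omega)] at hj
      omega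
    have := e2 0 j (by omega) (by omega)
    simp only [extLD, extRD, zero_add] at this
    split_ifs at this <;> omega
  · by_cases hmn : m ≤ n + 1
    · have := e1 (n + 2 - m) (by omega)
      simp only [extLD, extRD, show n + 2 - m + m - 1 = n + 1 by omega,
        show n + 2 - m ≠ 0 by omega, show n + 2 - m ≠ n + 1 by omega, if_true, if_false,
        Nat.add_one_ne_zero] at this
      exact this
    · rw [hD.ld_eq_zero (by omega)]
      omega
  · have : 1 < i ∧ i ≤ n := by
      by_contra
      rw [hD.ld_eq_zero (by omega)] at hi
      omega
    have := e2 i (n + 1) (by omega) le_rfl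
    simp only [extLD, extRD, show i ≠ 0 by omega, show i ≠ n + 1 by omega, if_true,
      if_false, Nat.add_one_ne_zero] at this
    exact this hi hb
  · have := e2 0 (n + 1) (by omega) le_rfl
    simp only [extLD, extRD, if_true, if_false, Nat.add_one_ne_zero] at this
    simpa using this ha hb
  · have := e1 0 (by omega)
    simpa [extLD, extRD, show m - 1 = n + 1 by omega] using this

lemma MRed.boundaryType (hm : 2 ≤ m) (ha : a ≤ 2) (hb : b ≤ 2) (hM : MRed m n A)
    (h : BoundaryConditions m a b n A) :
    BoundaryType m a b n A := by
  obtain ⟨⟨l1, l2⟩, ⟨r1, r2⟩, c⟩ := h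
  refine ⟨hM, fun i hi => ?_, fun i j hij hj hli hrj => ?_⟩
  · rcases Nat.eq_zero_or_pos i with rfl | hi0
    · simp only [extLD, extRD, zero_add]
      split_ifs <;> omega
    rcases eq_or_ne (i + m - 1) (n + 1) with he | he
    · obtain rfl : i = n + 2 - m := by omega
      simp only [extLD, extRD, he]
      split_ifs <;> omega
    · simp only [extLD, extRD, hi0.ne', he, if_false, show i ≠ n + 1 by omega,
        show i + m - 1 ≠ 0 by omega]
      exact hM.2.1 i hi0 (by omega)
  · have hin : i ≠ n + 1 := by omega
    have hj0 : j ≠ 0 := by omega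
    rcases Nat.eq_zero_or_pos i with rfl | hi0 <;> rcases eq_or_ne j (n + 1) with rfl | hjn
    · simp only [extLD, extRD, if_true, Nat.add_one_ne_zero, if_false] at hli hrj
      simpa using (c hli hrj).1
    · simp only [extLD, extRD, if_true, hj0, hjn, if_false] at hli hrj
      simpa using l2 hli j hrj
    · simp only [extLD, extRD, if_true, hi0.ne', hin, Nat.add_one_ne_zero, if_false] at hli hrj
      exact r2 hrj i hli
    · simp only [extLD, extRD, hi0.ne', hin, hj0, hjn, if_false] at hli hrj
      exact hM.2.2 i j hi0 hij (by omega) hli hrj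

theorem boundaryType_iff (hm : 2 ≤ m) (ha : a ≤ 2) (hb : b ≤ 2) :
    BoundaryType m a b n A ↔ MRed m n A ∧ BoundaryConditions m a b n A :=
  ⟨fun h => ⟨h.1, h.boundaryConditions hm ha hb⟩, fun h => h.1.boundaryType hm ha hb h.2⟩

-- The number of vertices next to a boundary vertex of degree `a` that must stay isolated.
def margin (m a : ℕ) : ℕ := if a = 0 then 0 else m + a - 3

@[simp] lemma margin_zero : margin m 0 = 0 := rfl

@[simp] lemma margin_one (hm : 2 ≤ m) : margin m 1 = m - 2 := by
  rw [margin, if_neg one_ne_zero]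
  omega

@[simp] lemma margin_two : margin m 2 = m - 1 := rfl

lemma margin_spec (m a : ℕ) : a = 0 ∧ margin m a = 0 ∨ 0 < a ∧ margin m a = m + a - 3 := by
  unfold margin
  split_ifs <;> omega

lemma BoundaryType.support (hm : 2 ≤ m) (ha : a ≤ 2) (hb : b ≤ 2)
    (hA : BoundaryType m a b n A) : ∀ p ∈ A, margin m a < p.1 ∧ p.2 + margin m b ≤ n := by
  obtain ⟨hM, ⟨l1, l2⟩, ⟨r1, r2⟩, -⟩ := (boundaryType_iff hm ha hb).1 hA
  intro p hp
  have := hM.isDiagram p hp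
  have hl := ld_pos_of_mem hp
  have hr := rd_pos_of_mem hp
  have hr' : p.1 = m - 1 → 0 < rd A (m - 1) := fun h => h ▸ hr
  have hl' : p.2 = n + 2 - m → 0 < ld A (n + 2 - m) := fun h => h ▸ hl
  have := margin_spec m a
  have := margin_spec m b
  have := fun ha => l2 ha _ hr
  have := fun hb => r2 hb _ hl
  omega

theorem boundaryType_iff_exists_shiftUp (hm : 2 ≤ m) (ha : a ≤ 2) (hb : b ≤ 2)
    (hn : margin m a + margin m b ≤ n) :
    BoundaryType m a b n A ↔ ∃ B, (MRed m (n - (margin m a + margin m b)) B ∧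
      (a = 1 → deg B 1 ≤ 1) ∧ (b = 1 → deg B (n - (margin m a + margin m b)) ≤ 1)) ∧
      A = shiftUp (margin m a) B := by
  set c := margin m a
  set k := n - (c + margin m b)
  have hca := margin_spec m a
  have hcb := margin_spec m b
  constructor
  · intro hA
    obtain ⟨B, hB, rfl⟩ := (boundaryType_iff hm ha hb).1 hA |>.1.exists_eq_shiftUp
      (c := c) (k := k) (by omega) fun p hp => by
        have := hA.support hm ha hb p hp
        omega
    obtain ⟨-, ⟨l1, -⟩, ⟨r1, -⟩, -⟩ := (boundaryType_iff hm ha hb).1 hA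
    have hD := hB.isDiagram
    rw [rd_shiftUp hD] at l1
    rw [ld_shiftUp hD] at r1
    refine ⟨B, ⟨hB, fun ha1 => ?_, fun hb1 => ?_⟩, rfl⟩
    · rw [deg, hD.ld_eq_zero (Or.inl le_rfl), show 1 = m - 1 - c by omega]
      omega
    · rw [deg, hD.rd_eq_zero (Or.inr le_rfl), show k = n + 2 - m - c by omega]
      omega
  · rintro ⟨B, ⟨hB, hB1, hBk⟩, rfl⟩
    have hD := hB.isDiagram
    have hz := hB.1
    rw [boundaryType_iff hm ha hb, mred_shiftUp_iff hD (by omega), BoundaryConditions,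
      rd_shiftUp hD, ld_shiftUp hD]
    refine ⟨hB, ⟨?_, fun ha0 j hj => ?_⟩, ⟨?_, fun hb0 i hi => ?_⟩,
      fun ha0 hb0 => by omega⟩
    · have := hz.rd_le_two (m - 1 - c)
      rcases (show a = 0 ∨ a = 1 ∧ m - 1 - c = 1 ∨ m - 1 - c = 0 by omega)
        with ha0 | ⟨rfl, h⟩ | h
      · omega
      · have := hB1 rfl
        rw [deg, ← h] at this
        omega
      · rw [h, hD.rd_eq_zero (Or.inl rfl)]
        omega
    · rw [rd_shiftUp hD] at hj
      have : j - c ≠ 0 := fun h => by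
        rw [h, hD.rd_eq_zero (Or.inl rfl)] at hj
        omega
      omega
    · have := hz.ld_le_two (n + 2 - m - c)
      rcases (show b = 0 ∨ b = 1 ∧ n + 2 - m - c = k ∨ k < n + 2 - m - c by omega)
        with hb0 | ⟨rfl, h⟩ | h
      · omega
      · have := hBk rfl
        rw [deg, ← h] at this
        omega
      · rw [hD.ld_eq_zero (Or.inr h)]
        omega
    · rw [ld_shiftUp hD] at hi
      have : i - c ≤ k := by
        by_contra
        rw [hD.ld_eq_zero (Or.inr (by omega))] at hi
        omega
      omega

end Boundary

section Counting

variable {m a b n : ℕ}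

lemma boundaryType_empty_iff (hm : 2 ≤ m) (ha : a ≤ 2) (hb : b ≤ 2) :
    BoundaryType m a b n ∅ ↔ BoundariesCompatible m a b n := by
  simp [boundaryType_iff hm ha hb, BoundaryConditions, mred_empty, ha, hb]

lemma tc_of_lt (hm : 2 ≤ m) (ha : a ≤ 2) (hb : b ≤ 2) (hn : n < margin m a + margin m b) :
    tc m a b n = if BoundariesCompatible m a b n then 1 else 0 := by
  have hempty (A : Arcs) (hA : BoundaryType m a b n A) : A = ∅ :=
    Finset.eq_empty_of_forall_notMem fun p hp => by
      have := hA.support hm ha hb p hp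
      have := hA.1.isDiagram p hp
      omega
  split_ifs with h
  · exact Nat.card_eq_one_iff_exists.2
      ⟨⟨∅, (boundaryType_empty_iff hm ha hb).2 h⟩, fun A => Subtype.ext (hempty A.1 A.2)⟩
  · exact Nat.card_eq_zero.2 <| .inl
      ⟨fun A => h ((boundaryType_empty_iff hm ha hb).1 (hempty A.1 A.2 ▸ A.2))⟩

-- Counts what is left of a boundary-type-`(a, b)` structure once its margins are deleted.
noncomputable def coreCount (m a b k : ℕ) : ℕ :=
  Nat.card {B : Arcs // MRed m k B ∧ (a = 1 → deg B 1 ≤ 1) ∧ (b = 1 → deg B k ≤ 1)}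

lemma tc_of_le (hm : 2 ≤ m) (ha : a ≤ 2) (hb : b ≤ 2) (hn : margin m a + margin m b ≤ n) :
    tc m a b n = coreCount m a b (n - (margin m a + margin m b)) := by
  refine (Nat.card_congr (Equiv.ofBijective
    (fun B => ⟨shiftUp (margin m a) B.1,
      (boundaryType_iff_exists_shiftUp hm ha hb hn).2 ⟨B.1, B.2, rfl⟩⟩) ⟨?_, ?_⟩)).symm
  · exact fun B B' h => Subtype.ext (shiftUp_injective _ (congrArg Subtype.val h))
  · intro A
    obtain ⟨B, hB, hA⟩ := (boundaryType_iff_exists_shiftUp hm ha hb hn).1 A.2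
    exact ⟨⟨B, hB⟩, Subtype.ext hA.symm⟩

lemma coreCount_eq_zm (ha : a ≠ 1) (hb : b ≠ 1) (k : ℕ) : coreCount m a b k = zm m k :=
  Nat.card_congr <| Equiv.subtypeEquivRight fun B => by simp [ha, hb]

lemma coreCount_left_one_eq_gcnt (hb : b ≠ 1) (k : ℕ) : coreCount m 1 b k = gcnt m k :=
  Nat.card_congr <| Equiv.subtypeEquivRight fun B => by simp [TypeG, hb]

lemma coreCount_one_one_eq_hcnt (k : ℕ) : coreCount m 1 1 k = hcnt m k :=
  Nat.card_congr <| Equiv.subtypeEquivRight fun B => by simp [TypeH]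

lemma coreCount_right_one_eq_gcnt (ha : a ≠ 1) (k : ℕ) : coreCount m a 1 k = gcnt m k :=
  (Nat.card_congr <| Equiv.subtypeEquivRight fun B => by simp [ha]).trans
    (card_mred_deg_last_le_one m k)

lemma coeff_Tgf (hm : 2 ≤ m) (ha : a ≤ 2) (hb : b ≤ 2) (n : ℕ) :
    coeff n (Tgf m a b) = if margin m a + margin m b ≤ n
      then (coreCount m a b (n - (margin m a + margin m b)) : ℚ)
      else if BoundariesCompatible m a b n then 1 else 0 := by
  rw [Tgf, coeff_mk]
  by_cases hn : margin m a + margin m b ≤ n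
  · rw [if_pos hn, tc_of_le hm ha hb hn]
  · rw [if_neg hn, tc_of_lt hm ha hb (by omega), Nat.cast_ite, Nat.cast_one, Nat.cast_zero]

end Counting

/-- the generating functions `T_i(x)` in terms of `Z_m`, `G`, `H`;
`(1−x^k)/(1−x)` is the polynomial `1 + x + ⋯ + x^{k−1}`. -/
theorem T_formulas (m : ℕ) (hm : 2 ≤ m) :
    Tgf m 0 0 = Zm m ∧
    Tgf m 1 0 = (∑ i ∈ Finset.range (m - 2), Xq ^ i) + Xq ^ (m - 2) * Ggf m ∧
    Tgf m 1 1 = Xq ^ (m - 2) * (∑ i ∈ Finset.range (m - 2), Xq ^ i)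
        + Xq ^ (2 * m - 4) * Hgf m ∧
    Tgf m 2 0 = (∑ i ∈ Finset.range (m - 1), Xq ^ i) + Xq ^ (m - 1) * Zm m ∧
    Tgf m 2 1 = Xq ^ (m - 1) * (∑ i ∈ Finset.range (m - 2), Xq ^ i)
        + Xq ^ (2 * m - 3) * Ggf m ∧
    Tgf m 2 2 = Xq ^ (m - 1) * (∑ i ∈ Finset.range (m - 1), Xq ^ i)
        + Xq ^ (2 * m - 2) * Zm m := by
  refine ⟨?_, ?_, ?_, ?_, ?_, ?_⟩ <;> ext n <;>
    simp only [coeff_Tgf hm, Nat.one_le_ofNat, Std.le_refl, zero_le, margin_zero, margin_one hm,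
      margin_two, ne_eq, zero_ne_one, OfNat.ofNat_ne_one, not_false_eq_true, coreCount_eq_zm,
      coreCount_left_one_eq_gcnt, coreCount_one_one_eq_hcnt, coreCount_right_one_eq_gcnt, Zm,
      Ggf, Hgf, Xq, map_add, map_sum, coeff_X_pow, Finset.sum_ite_eq, Finset.mem_range,
      coeff_X_pow_mul', coeff_mk] <;>
    split_ifs <;> (try simp only [zero_add, add_zero]) <;> first | omega | (congr 3 <;> omega)
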